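/- Let N_φ, N_ψ ∈ ℂ, define φₙ(x) = (N_φ/(2ⁿ √(n!))) Hₙ(sinh x) e^{−cosh²x}, ψₙ(x) = (2N_ψ/√(n!)) Hₙ(sinh x) cosh x, and eₙ(s) = (2ⁿ n! √π)^{−1/2} Hₙ(s) e^{−s²/2}. For h : ℝ → ℂ set h_{[−]}(s) = h(arsinh s) e^{s²/2} and h_{[+]}(s) = h(arsinh s) e^{−s²/2}/√(1+s²), and let E_c = { h ∈ L²(ℝ) : h_{[−]} ∈ L²(ℝ) }. Then for every f, g ∈ E_c and every n ≥ 0: ∫_ℝ conj(f(x)) φₙ(x) dx = (N_φ π^{1/4}/(2^{n/2} e)) ∫_ℝ conj(f_{[+]}(s)) eₙ(s) ds, and ∫_ℝ conj(ψₙ(x)) g(x) dx = 2 conj(N_ψ) 2^{n/2} π^{1/4} ∫_ℝ conj(eₙ(s)) g_{[−]}(s) ds; in particular all four integrals are finite. -/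

import Mathlib

open MeasureTheory

/-- The physicist's Hermite polynomials:
`H₀(y) = 1`, `Hₙ(y) = 2y H_{n−1}(y) − H_{n−1}′(y)`. -/
noncomputable def hermiteH : ℕ → ℝ → ℝ
  | 0 => fun _ => 1
  | n + 1 => fun y => 2 * y * hermiteH n y - deriv (hermiteH n) y

/-- The Hermite functions `eₙ(s) = (2ⁿ n! √π)^{−1/2} Hₙ(s) e^{−s²/2}`. -/
noncomputable def hermFun (n : ℕ) (s : ℝ) : ℝ :=
  (Real.sqrt (2 ^ n * n.factorial * Real.sqrt Real.pi))⁻¹ * hermiteH n s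
    * Real.exp (-s ^ 2 / 2)

/-- `h_{[−]}(s) = h(arsinh s) e^{s²/2}`. -/
noncomputable def minusT (h : ℝ → ℂ) : ℝ → ℂ :=
  fun s => h (Real.arsinh s) * (Real.exp (s ^ 2 / 2) : ℂ)

/-- `h_{[+]}(s) = h(arsinh s) e^{−s²/2}/√(1+s²)`. -/
noncomputable def plusT (h : ℝ → ℂ) : ℝ → ℂ :=
  fun s => h (Real.arsinh s) * (Real.exp (-s ^ 2 / 2) : ℂ) / (Real.sqrt (1 + s ^ 2) : ℂ)

/-- `E_c = { h ∈ L² : h_{[−]} ∈ L² }`. -/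
def Ec : Set (ℝ → ℂ) :=
  {h | MemLp h 2 (volume : Measure ℝ) ∧ MemLp (minusT h) 2 (volume : Measure ℝ)}


/-! Substituting `s = sinh x`, so that `ds = cosh x dx`, `√(1 + s²) = cosh x` and
`cosh² x = 1 + s²`, turns each integrand over `x` into a constant multiple of `cosh x` times the
corresponding integrand over `s` evaluated at `sinh x`. On the `s` side both integrands are
products of two `L²` functions: the Hermite function (a polynomial times a Gaussian), and
`g_{[−]}`, resp. `f_{[+]} = f_{[−]} · e^{−s²}/√(1+s²)`, which is dominated by `|f_{[−]}|`. -/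

open Polynomial Real ComplexConjugate

lemma exists_hermiteH_eq_eval (n : ℕ) : ∃ p : ℝ[X], hermiteH n = fun y => p.eval y := by
  induction n with
  | zero => exact ⟨1, by funext y; simp [hermiteH]⟩
  | succ n ih =>
    obtain ⟨p, hp⟩ := ih
    refine ⟨C 2 * X * p - derivative p, funext fun y => ?_⟩
    simp [hermiteH, hp, Polynomial.deriv]

lemma continuous_hermiteH (n : ℕ) : Continuous (hermiteH n) := by
  obtain ⟨p, hp⟩ := exists_hermiteH_eq_eval n
  exact hp ▸ p.continuous

lemma Polynomial.integrable_eval_mul_exp_neg_mul_sq (p : ℝ[X]) {b : ℝ} (hb : 0 < b) :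
    Integrable fun x : ℝ => p.eval x * exp (-b * x ^ 2) := by
  induction p using Polynomial.induction_on' with
  | add p q hp hq =>
    simp only [eval_add, add_mul]
    exact hp.add hq
  | monomial k a =>
    have hk : Integrable fun x : ℝ => x ^ (k : ℝ) * exp (-b * x ^ 2) :=
      integrable_rpow_mul_exp_neg_mul_sq hb (neg_one_lt_zero.trans_le k.cast_nonneg)
    simpa only [eval_monomial, rpow_natCast, mul_assoc] using hk.const_mul a

lemma memLp_hermFun (n : ℕ) : MemLp (hermFun n) 2 volume := by
  obtain ⟨p, hp⟩ := exists_hermiteH_eq_eval n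
  have hcont : Continuous (hermFun n) := by
    have := continuous_hermiteH n
    unfold hermFun
    fun_prop
  rw [memLp_two_iff_integrable_sq hcont.aestronglyMeasurable]
  refine (((p * p).integrable_eval_mul_exp_neg_mul_sq one_pos).const_mul
    ((√(2 ^ n * n.factorial * √π))⁻¹ ^ 2)).congr (ae_of_all _ fun s => ?_)
  have hexp : exp (-1 * s ^ 2) = exp (-s ^ 2 / 2) ^ 2 := by rw [← exp_nat_mul]; ring_nf
  simp only [hermFun, hp, eval_mul, hexp]
  ring

section ChangeOfVariables

variable {E : Type*} [NormedAddCommGroup E] [NormedSpace ℝ E]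

lemma integrable_cosh_smul_comp_sinh_iff (G : ℝ → E) :
    Integrable (fun x => cosh x • G (sinh x)) ↔ Integrable G := by
  have h := integrableOn_image_iff_integrableOn_abs_deriv_smul MeasurableSet.univ
    (fun x _ => (hasDerivAt_sinh x).hasDerivWithinAt) sinh_injective.injOn G
  simpa only [Set.image_univ, sinh_surjective.range_eq, integrableOn_univ,
    abs_of_pos (cosh_pos _)] using h.symm

lemma integral_cosh_smul_comp_sinh (G : ℝ → E) :
    ∫ x, cosh x • G (sinh x) = ∫ s, G s := by
  have h := integral_image_eq_integral_abs_deriv_smul MeasurableSet.univ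
    (fun x _ => (hasDerivAt_sinh x).hasDerivWithinAt) sinh_injective.injOn G
  simpa only [Set.image_univ, sinh_surjective.range_eq, setIntegral_univ,
    abs_of_pos (cosh_pos _)] using h.symm

end ChangeOfVariables

lemma integrable_conj_mul {α : Type*} [MeasurableSpace α] {μ : Measure α} {u v : α → ℂ}
    (hu : MemLp u 2 μ) (hv : MemLp v 2 μ) : Integrable (fun x => conj (u x) * v x) μ :=
  hu.star.integrable_mul hv

lemma plusT_eq_minusT_mul (h : ℝ → ℂ) (s : ℝ) :
    plusT h s = minusT h s * ((exp (-s ^ 2) / √(1 + s ^ 2) : ℝ) : ℂ) := by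
  have hexp : exp (-s ^ 2 / 2) = exp (s ^ 2 / 2) * exp (-s ^ 2) := by rw [← exp_add]; ring_nf
  simp only [plusT, minusT, hexp]
  push_cast
  ring

lemma memLp_plusT {h : ℝ → ℂ} (hh : MemLp (minusT h) 2 volume) : MemLp (plusT h) 2 volume := by
  have hw : Continuous fun s : ℝ => ((exp (-s ^ 2) / √(1 + s ^ 2) : ℝ) : ℂ) := by
    refine Complex.continuous_ofReal.comp (.div (by fun_prop) (by fun_prop) fun s => ?_)
    positivity
  have hmeas : AEStronglyMeasurable (plusT h) volume := by
    rw [funext (plusT_eq_minusT_mul h)]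
    exact hh.1.mul hw.aestronglyMeasurable
  refine hh.of_le hmeas (ae_of_all _ fun s => ?_)
  rw [plusT_eq_minusT_mul, norm_mul, Complex.norm_real]
  refine mul_le_of_le_one_right (norm_nonneg _) ?_
  rw [norm_of_nonneg (by positivity)]
  exact div_le_one_of_le₀ ((exp_le_one_iff.2 (by nlinarith)).trans
    (one_le_sqrt.2 (by nlinarith))) (sqrt_nonneg _)

lemma sqrt_hermFun_norm (n : ℕ) :
    √(2 ^ n * n.factorial * √π) = √2 ^ n * √n.factorial * π ^ ((1 : ℝ) / 4) := by
  have h2 : √(2 ^ n) = √2 ^ n := by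
    rw [sqrt_eq_iff_eq_sq (by positivity) (by positivity), ← pow_mul, mul_comm, pow_mul,
      sq_sqrt zero_le_two]
  have hπ : √√π = π ^ ((1 : ℝ) / 4) := by
    rw [sqrt_eq_rpow, sqrt_eq_rpow, ← rpow_mul pi_nonneg]
    norm_num
  rw [sqrt_mul (by positivity), sqrt_mul (by positivity), h2, hπ]

lemma conj_mul_phi_eq (Nφ : ℂ) (f : ℝ → ℂ) (n : ℕ) (x : ℝ) :
    conj (f x) * (Nφ / ((2 : ℂ) ^ n * (√n.factorial : ℂ))
        * (hermiteH n (sinh x) : ℂ) * (exp (-(cosh x) ^ 2) : ℂ))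
      = Nφ * ((π ^ ((1 : ℝ) / 4) : ℝ) : ℂ) / ((√2 ^ n : ℂ) * ((exp 1 : ℝ) : ℂ))
        * (cosh x • (conj (plusT f (sinh x)) * (hermFun n (sinh x) : ℂ))) := by
  have hcosh : √(1 + sinh x ^ 2) = cosh x := by
    rw [← cosh_sq', sqrt_sq (cosh_pos x).le]
  have hexp : exp (-cosh x ^ 2) = exp (-sinh x ^ 2 / 2) ^ 2 / exp 1 := by
    rw [← exp_nat_mul, ← exp_sub, cosh_sq']; ring_nf
  have h2 : ((√2 : ℂ) ^ n) ^ 2 = 2 ^ n := by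
    rw [← pow_mul, mul_comm, pow_mul, ← Complex.ofReal_pow, sq_sqrt zero_le_two]; norm_num
  have hc : (cosh x : ℂ) ≠ 0 := Complex.ofReal_ne_zero.2 (cosh_pos x).ne'
  simp only [plusT, hermFun, arsinh_sinh, hcosh, hexp, sqrt_hermFun_norm, Complex.real_smul,
    map_mul, map_div₀, Complex.conj_ofReal, Complex.ofReal_mul, Complex.ofReal_div,
    Complex.ofReal_inv, Complex.ofReal_pow]
  field_simp
  rw [h2]
  ring

lemma conj_psi_mul_eq (Nψ : ℂ) (g : ℝ → ℂ) (n : ℕ) (x : ℝ) :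
    conj (2 * Nψ / (√n.factorial : ℂ) * (hermiteH n (sinh x) : ℂ) * (cosh x : ℂ)) * g x
      = 2 * conj Nψ * (√2 ^ n : ℂ) * ((π ^ ((1 : ℝ) / 4) : ℝ) : ℂ)
        * (cosh x • (conj (hermFun n (sinh x) : ℂ) * minusT g (sinh x))) := by
  simp only [minusT, hermFun, arsinh_sinh, sqrt_hermFun_norm, Complex.real_smul,
    map_mul, map_div₀, map_inv₀, map_pow, Complex.conj_ofReal, map_ofNat, neg_div, exp_neg,
    Complex.ofReal_mul, Complex.ofReal_inv, Complex.ofReal_pow]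
  field_simp

/-- the compatibility forms of `f` with `φₙ` and of `ψₙ` with `g`
are genuine `L²` inner products against the Hermite functions. -/
theorem stmt13 (Nφ Nψ : ℂ)
    (φ ψ : ℕ → ℝ → ℂ)
    (hφdef : ∀ n : ℕ, φ n = fun x =>
      Nφ / ((2 : ℂ) ^ n * (Real.sqrt n.factorial : ℂ))
        * (hermiteH n (Real.sinh x) : ℂ) * (Real.exp (-(Real.cosh x) ^ 2) : ℂ))
    (hψdef : ∀ n : ℕ, ψ n = fun x =>
      2 * Nψ / (Real.sqrt n.factorial : ℂ)
        * (hermiteH n (Real.sinh x) : ℂ) * (Real.cosh x : ℂ)) :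
    ∀ f ∈ Ec, ∀ g ∈ Ec, ∀ n : ℕ,
      Integrable (fun x : ℝ => (starRingEnd ℂ) (f x) * φ n x) volume ∧
      Integrable (fun s : ℝ => (starRingEnd ℂ) (plusT f s) * (hermFun n s : ℂ)) volume ∧
      Integrable (fun x : ℝ => (starRingEnd ℂ) (ψ n x) * g x) volume ∧
      Integrable (fun s : ℝ => (starRingEnd ℂ) ((hermFun n s : ℂ)) * minusT g s) volume ∧
      (∫ x : ℝ, (starRingEnd ℂ) (f x) * φ n x)
        = Nφ * ((Real.pi ^ ((1 : ℝ) / 4) : ℝ) : ℂ)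
            / ((Real.sqrt 2 ^ n : ℂ) * ((Real.exp 1 : ℝ) : ℂ))
          * ∫ s : ℝ, (starRingEnd ℂ) (plusT f s) * (hermFun n s : ℂ) ∧
      (∫ x : ℝ, (starRingEnd ℂ) (ψ n x) * g x)
        = 2 * (starRingEnd ℂ) Nψ * (Real.sqrt 2 ^ n : ℂ) * ((Real.pi ^ ((1 : ℝ) / 4) : ℝ) : ℂ)
          * ∫ s : ℝ, (starRingEnd ℂ) ((hermFun n s : ℂ)) * minusT g s := by
  intro f hf g hg n
  have hφ : Integrable (fun s => conj (plusT f s) * (hermFun n s : ℂ)) :=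
    integrable_conj_mul (memLp_plusT hf.2) (memLp_hermFun n).ofReal
  have hψ : Integrable (fun s => conj (hermFun n s : ℂ) * minusT g s) :=
    integrable_conj_mul (memLp_hermFun n).ofReal hg.2
  simp only [hφdef, hψdef, conj_mul_phi_eq, conj_psi_mul_eq, integral_const_mul]
  exact ⟨((integrable_cosh_smul_comp_sinh_iff _).2 hφ).const_mul _, hφ,
    ((integrable_cosh_smul_comp_sinh_iff _).2 hψ).const_mul _, hψ,
    congrArg _ (integral_cosh_smul_comp_sinh fun s => conj (plusT f s) * (hermFun n s : ℂ)),
    congrArg _ (integral_cosh_smul_comp_sinh fun s => conj (hermFun n s : ℂ) * minusT g s)⟩
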